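/- Let λ > 0 and let f ∈ L²(ℝ₊, x^{2λ}dx). Suppose the nontangential maximal function x ↦ sup_{|y−x|<t}|P_t^{[λ]}f(y)| belongs to L^p(ℝ₊, x^{2λ}dx) for some p ∈ ((2λ+1)/(2λ+2), 1]. Then P_t^{[λ]}f(x) → 0 as t → ∞, uniformly; more precisely, |P_t^{[λ]}f(x)|^p ≤ m_λ(I(x,t))^{−1} ‖sup_{|·−y|<t}|P_t f(y)|‖_{L^p}^p for all x, t. -/

import Mathlib

noncomputable section
open MeasureTheory Set

/-- The Bessel Poisson kernel `P_t^{[λ]}(x,y)`. -/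
def besselP (lam t x y : ℝ) : ℝ :=
  (2 * lam * t / Real.pi) * ∫ θ in Ioo (0 : ℝ) Real.pi,
    (Real.sin θ) ^ (2 * lam - 1) / (x ^ 2 + y ^ 2 + t ^ 2 - 2 * x * y * Real.cos θ) ^ (lam + 1)

/-- The Bessel Poisson integral `P_t^{[λ]}f(x)`. -/
def besselPop (lam : ℝ) (f : ℝ → ℝ) (t x : ℝ) : ℝ :=
  ∫ y in Ioi (0 : ℝ), besselP lam t x y * f y * y ^ (2 * lam)

/-- The measure `x^{2λ} dx` on `(0,∞)`. -/
def muL (lam : ℝ) : Measure ℝ :=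
  (volume.restrict (Ioi (0 : ℝ))).withDensity fun x => ENNReal.ofReal (x ^ (2 * lam))

/-- Bessel measure of the interval `I(x,r) = (x-r, x+r) ∩ (0,∞)`. -/
def mLambda (lam x r : ℝ) : ℝ :=
  ∫ u in Ioo (x - r) (x + r) ∩ Ioi (0 : ℝ), u ^ (2 * lam)

/-! Every point `u` of `I(x,t)` sees `(x,t)` inside its cone, so `|P_t f(x)|^p ≤ N(u)^p` there;
averaging this over `I(x,t)` against `u^{2λ} du` and enlarging the domain to `ℝ₊` gives the
bound. -/

theorem setIntegral_le_setIntegral_of_subset {α : Type*} [MeasurableSpace α] {μ : Measure α}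
    {S T : Set α} {φ ψ : α → ℝ} (hS : MeasurableSet S) (hT : MeasurableSet T) (hST : S ⊆ T)
    (hφ : ∀ u ∈ S, 0 ≤ φ u) (hφψ : ∀ u ∈ S, φ u ≤ ψ u) (hψ : ∀ u ∈ T, 0 ≤ ψ u)
    (hψint : IntegrableOn ψ T μ) :
    ∫ u in S, φ u ∂μ ≤ ∫ u in T, ψ u ∂μ :=
  calc ∫ u in S, φ u ∂μ
      ≤ ∫ u in S, ψ u ∂μ :=
        integral_mono_of_nonneg (ae_restrict_of_forall_mem hS hφ) (hψint.mono_set hST)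
          (ae_restrict_of_forall_mem hS hφψ)
    _ ≤ ∫ u in T, ψ u ∂μ :=
        setIntegral_mono_set hψint (ae_restrict_of_forall_mem hT hψ) hST.eventuallyLE

theorem stmt16_general (lam p : ℝ) (hlam : 0 < lam)
    (hp1 : (2 * lam + 1) / (2 * lam + 2) < p)
    (f : ℝ → ℝ)
    (N : ℝ → ℝ)
    (hN : ∀ x y t : ℝ, 0 < t → |y - x| < t → |besselPop lam f t y| ≤ N x)
    (hNint : IntegrableOn (fun z => (N z) ^ p * z ^ (2 * lam)) (Ioi (0 : ℝ))) :
    ∀ x t : ℝ, 0 < x → 0 < t →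
      |besselPop lam f t x| ^ p * mLambda lam x t
        ≤ ∫ z in Ioi (0 : ℝ), (N z) ^ p * z ^ (2 * lam) := by
  intro x t _ ht
  have hp : 0 ≤ p := (div_pos (by linarith) (by linarith)).le.trans hp1.le
  have hN_nonneg (u : ℝ) : 0 ≤ N u := (abs_nonneg _).trans (hN u u 1 one_pos (by simp))
  have hcone {u : ℝ} (hu : u ∈ Ioo (x - t) (x + t)) : |besselPop lam f t x| ≤ N u :=
    hN u x t ht (abs_sub_lt_iff.2 ⟨by linarith [hu.1], by linarith [hu.2]⟩)
  rw [mLambda, ← integral_const_mul]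
  refine setIntegral_le_setIntegral_of_subset (measurableSet_Ioo.inter measurableSet_Ioi)
    measurableSet_Ioi inter_subset_right (fun u hu => ?_) (fun u hu => ?_) (fun u hu => ?_) hNint
  · exact mul_nonneg (Real.rpow_nonneg (abs_nonneg _) p) (Real.rpow_nonneg hu.2.le _)
  · exact mul_le_mul_of_nonneg_right (Real.rpow_le_rpow (abs_nonneg _) (hcone hu.1) hp)
      (Real.rpow_nonneg hu.2.le _)
  · exact mul_nonneg (Real.rpow_nonneg (hN_nonneg u) p) (Real.rpow_nonneg (le_of_lt hu) _)

/-- If the nontangential maximal function `N` of `P_t^{[λ]}f` lies in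
`L^p(ℝ₊, x^{2λ}dx)` for some `p ∈ ((2λ+1)/(2λ+2), 1]`, then
`|P_t^{[λ]}f(x)|^p ≤ m_λ(I(x,t))⁻¹ ‖N‖_{L^p}^p` for all `x, t > 0`
(in particular `P_t^{[λ]}f → 0` as `t → ∞`). -/
theorem stmt16 (lam p : ℝ) (hlam : 0 < lam)
    (hp1 : (2 * lam + 1) / (2 * lam + 2) < p) (hp2 : p ≤ 1)
    (f : ℝ → ℝ) (hf : MemLp f 2 (muL lam))
    (N : ℝ → ℝ)
    (hN : ∀ x y t : ℝ, 0 < t → |y - x| < t → |besselPop lam f t y| ≤ N x)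
    (hNint : IntegrableOn (fun z => (N z) ^ p * z ^ (2 * lam)) (Ioi (0 : ℝ))) :
    ∀ x t : ℝ, 0 < x → 0 < t →
      |besselPop lam f t x| ^ p * mLambda lam x t
        ≤ ∫ z in Ioi (0 : ℝ), (N z) ^ p * z ^ (2 * lam) :=
  stmt16_general lam p hlam hp1 f N hN hNint
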